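/- Let h, b ∈ ℂ((z)) with h' ≠ 0 and 𝔳(h) < 0, c ∈ ℂ, and ρ = ρ_{(h,c,b)}. Let U ⊆ ℂ((z)) be a ℂ-subspace such that ρ(L_k)(U) ⊆ U for all k ≥ −1 and whose stabilizer satisfies A_U = ℂ[h] = {p(h) : p ∈ ℂ[X]}. Then every first-order differential operator D : f ↦ a·f' + m·f on ℂ((z)) with D(U) ⊆ U can be written D = M_{p(h)} + M_{q(h)} ∘ ρ(L_{−1}) for some polynomials p, q ∈ ℂ[X]; equivalently, a = −q(h)/h' and m = p(h) + q(h)·b/h' for some p, q ∈ ℂ[X]. -/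

import Mathlib

set_option maxHeartbeats 1000000
set_option synthInstance.maxHeartbeats 1000000

noncomputable section

open Polynomial

/-- `K` is the field of formal Laurent series `ℂ((z))`. -/
abbrev K : Type := LaurentSeries ℂ

/-- The formal (termwise) derivative on `ℂ((z))`, as a `ℂ`-linear map. -/
def D : K →ₗ[ℂ] K where
  toFun f :=
    { coeff := fun n => ((n + 1 : ℤ) : ℂ) * f.coeff (n + 1)
      isPWO_support' := by
        have hsub : (Function.support fun n : ℤ => ((n + 1 : ℤ) : ℂ) * f.coeff (n + 1)) ⊆
            (fun m : ℤ => m - 1) '' (Function.support f.coeff) := by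
          intro n hn
          refine ⟨n + 1, fun h0 => hn (by simp [h0]), by ring⟩
        exact ((f.isPWO_support'.image_of_monotone
          (f := fun m : ℤ => m - 1) (fun a b hab => by dsimp only; omega))).mono hsub }
  map_add' f g := by
    ext n
    show ((n + 1 : ℤ) : ℂ) * (f + g).coeff (n + 1) = _
    simp [HahnSeries.coeff_add, mul_add]
  map_smul' c f := by
    ext n
    show ((n + 1 : ℤ) : ℂ) * (c • f).coeff (n + 1) = _
    simp only [HahnSeries.coeff_smul, RingHom.id_apply, smul_eq_mul]
    ring

instance : SMulCommClass ℂ K K where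
  smul_comm c x y := by
    simp only [smul_eq_mul]
    rw [← HahnSeries.C_mul_eq_smul, ← HahnSeries.C_mul_eq_smul]; ring

instance : IsScalarTower ℂ K K where
  smul_assoc c x y := by
    simp only [smul_eq_mul]
    rw [← HahnSeries.C_mul_eq_smul, ← HahnSeries.C_mul_eq_smul]; ring

/-- The first-order differential operator `ψ ↦ a·ψ' + m·ψ`. -/
def fdOp (a m : K) : Module.End ℂ K :=
  (LinearMap.mulLeft ℂ a).comp (D : K →ₗ[ℂ] K) + LinearMap.mulLeft ℂ m

/-- A `ℂ`-linear endomorphism of `ℂ((z))` is a first-order differential operator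
if it has the form `ψ ↦ a·ψ' + m·ψ` for some `a, m ∈ ℂ((z))`. -/
def IsFDO (P : Module.End ℂ K) : Prop := ∃ a m : K, P = fdOp a m

/-- The symbol `−h^(k+1)/h'` of `ρ_{(h,c,b)}(L_k)`. -/
def wittA (h : K) (k : ℤ) : K := -(h ^ (k + 1)) / D h

/-- The zeroth-order coefficient `−(k+1)·c·h^k + (h^(k+1)/h')·b` of `ρ_{(h,c,b)}(L_k)`. -/
def wittM (h : K) (c : ℂ) (b : K) (k : ℤ) : K :=
  (-(((k : ℂ) + 1) * c)) • h ^ k + (h ^ (k + 1) / D h) * b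

/-- The Witt family `ρ_{(h,c,b)}(L_k) : f ↦ −(h^{k+1}/h')·f' + (−(k+1)·c·h^k + (h^{k+1}/h')·b)·f`. -/
def wittOp (h : K) (c : ℂ) (b : K) (k : ℤ) : Module.End ℂ K :=
  fdOp (wittA h k) (wittM h c b k)

/-- The Laurent series `z`. -/
def zK : K := HahnSeries.single (1 : ℤ) (1 : ℂ)

/-- The residue: the coefficient of `z⁻¹`. -/
def Res (f : K) : ℂ := f.coeff (-1)

/-- The Gelfand–Fuchs cocycle, on the data `(a᷀1, m₁), (a₂, m₂)` of two first-order
differential operators `P_i : f ↦ a_i·f' + m_i·f`. -/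
def GF (a₁ m₁ a₂ m₂ : K) : ℂ :=
  (1/6 : ℂ) * Res (D (D a₁) * D a₂) + (1/2 : ℂ) * Res (D a₁ * D m₂)
    + (1/2 : ℂ) * Res (D (D m₁) * a₂) + Res (D m₁ * m₂)

/-- The Schwarzian derivative `S(h) = h'''/h' − (3/2)·(h''/h')²`. -/
def Sch (h : K) : K := D (D (D h)) / D h - (3/2 : ℂ) • (D (D h) / D h) ^ 2

/-- `ℂ[[z]]` as a `ℂ`-subspace of `ℂ((z))`. -/
def PS : Submodule ℂ K where
  carrier := {f : K | ∀ n : ℤ, n < 0 → f.coeff n = 0}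
  add_mem' := fun hf hg n hn => by simp [HahnSeries.coeff_add, hf n hn, hg n hn]
  zero_mem' := fun n _ => rfl
  smul_mem' := fun c f hf n hn => by simp [HahnSeries.coeff_smul, hf n hn]


lemma D_coeff (f : K) (n : ℤ) : (D f).coeff n = ((n + 1 : ℤ) : ℂ) * f.coeff (n + 1) := rfl

lemma supp_sub (f g : K) (m : ℤ) :
    (Function.support fun i : ℤ => f.coeff i * g.coeff (m - i)) ⊆
      ((Finset.antidiagonal f.isPWO_support g.isPWO_support m).image Prod.fst : Finset ℤ) := by
  intro i hi
  rw [Function.mem_support] at hi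
  simp only [Finset.coe_image, Set.mem_image, Finset.mem_coe]
  refine ⟨(i, m - i), ?_, rfl⟩
  rw [Finset.mem_addAntidiagonal]
  refine ⟨?_, ?_, by ring⟩
  · simp only [HahnSeries.mem_support]
    intro h0
    exact hi (by rw [h0, zero_mul])
  · simp only [HahnSeries.mem_support]
    intro h0
    exact hi (by rw [h0, mul_zero])

lemma supp_fin (f g : K) (m : ℤ) :
    (Function.support fun i : ℤ => f.coeff i * g.coeff (m - i)).Finite :=
  Set.Finite.subset (Finset.finite_toSet _) (supp_sub f g m)

lemma mul_coeff_finsum (f g : K) (m : ℤ) :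
    (f * g).coeff m = ∑ᶠ i : ℤ, f.coeff i * g.coeff (m - i) := by
  classical
  rw [HahnSeries.coeff_mul]
  rw [finsum_eq_finset_sum_of_support_subset _ (supp_sub f g m)]
  rw [Finset.sum_image (fun x hx y hy hxy => by
    rw [Finset.mem_coe, Finset.mem_addAntidiagonal] at hx hy
    exact Prod.ext hxy (by omega))]
  apply Finset.sum_congr rfl
  intro ij hij
  rw [Finset.mem_addAntidiagonal] at hij
  have : m - ij.1 = ij.2 := by omega
  rw [this]

lemma D_mul (f g : K) : D (f * g) = D f * g + f * D g := by
  ext n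
  rw [D_coeff, HahnSeries.coeff_add, mul_coeff_finsum, mul_coeff_finsum, mul_coeff_finsum]
  have h1 : ∑ᶠ i : ℤ, (D f).coeff i * g.coeff (n - i)
      = ∑ᶠ i : ℤ, ((i : ℂ) * f.coeff i) * g.coeff (n + 1 - i) := by
    rw [← finsum_comp_equiv (Equiv.subRight (1 : ℤ))]
    apply finsum_congr
    intro i
    show (D f).coeff (i - 1) * g.coeff (n - (i - 1)) = _
    rw [D_coeff]
    have e1 : i - 1 + 1 = i := by ring
    have e2 : n - (i - 1) = n + 1 - i := by ring
    rw [e1, e2]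
  have h2 : ∑ᶠ i : ℤ, f.coeff i * (D g).coeff (n - i)
      = ∑ᶠ i : ℤ, (((n + 1 - i : ℤ) : ℂ)) * (f.coeff i * g.coeff (n + 1 - i)) := by
    apply finsum_congr
    intro i
    rw [D_coeff]
    have e1 : n - i + 1 = n + 1 - i := by ring
    rw [e1]
    ring
  rw [h1, h2]
  have hf1 : (Function.support fun i : ℤ => ((i : ℂ) * f.coeff i) * g.coeff (n + 1 - i)).Finite := by
    apply (supp_fin f g (n + 1)).subset
    intro i hi
    rw [Function.mem_support] at hi ⊢
    intro h0; apply hi; rw [mul_assoc, h0, mul_zero]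
  have hf2 : (Function.support fun i : ℤ =>
      (((n + 1 - i : ℤ) : ℂ)) * (f.coeff i * g.coeff (n + 1 - i))).Finite := by
    apply (supp_fin f g (n + 1)).subset
    intro i hi
    rw [Function.mem_support] at hi ⊢
    intro h0; apply hi; rw [h0, mul_zero]
  rw [← finsum_add_distrib hf1 hf2, mul_finsum _ _]
  apply finsum_congr
  intro i
  push_cast
  ring

lemma fdOp_apply (a m f : K) : fdOp a m f = a * D f + m * f := rfl

/-- first-order stabilizer: if `U` is `W⁺`-stable and `A_U = ℂ[h]`,
every first-order differential operator `D = a·∂ + m` preserving `U` has the form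
`M_{p(h)} + M_{q(h)} ∘ ρ(L_{-1})`, i.e. `a = −q(h)/h'` and `m = p(h) + q(h)·b/h'`. -/
theorem statement15 (h b : K) (hh : D h ≠ 0) (hord : h.order < 0) (c : ℂ)
    (U : Submodule ℂ K)
    (hstab : ∀ k : ℤ, -1 ≤ k → ∀ u ∈ U, wittOp h c b k u ∈ U)
    (hA : {f : K | ∀ u ∈ U, f * u ∈ U}
        = Set.range (fun p : Polynomial ℂ => Polynomial.aeval h p)) :
    ∀ a m : K, (∀ u ∈ U, fdOp a m u ∈ U) →
      ∃ p q : Polynomial ℂ,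
        fdOp a m = LinearMap.mulLeft ℂ (Polynomial.aeval h p)
            + LinearMap.mulLeft ℂ (Polynomial.aeval h q) ∘ₗ wittOp h c b (-1) ∧
        a = -Polynomial.aeval h q / D h ∧
        m = Polynomial.aeval h p + Polynomial.aeval h q * b / D h := by
  intro a m hP
  have hhA : ∀ u ∈ U, h * u ∈ U := by
    have : h ∈ {f : K | ∀ u ∈ U, f * u ∈ U} := by
      rw [hA]; exact ⟨X, by simp⟩
    exact this
  have key : a * D h ∈ Set.range (fun p : Polynomial ℂ => Polynomial.aeval h p) := by
    rw [← hA]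
    intro u hu
    have h1 : fdOp a m (h * u) ∈ U := hP _ (hhA u hu)
    have h2 : h * fdOp a m u ∈ U := hhA _ (hP u hu)
    have h3 : (a * D h) * u = fdOp a m (h * u) - h * fdOp a m u := by
      simp only [fdOp_apply, D_mul]
      ring
    rw [h3]
    exact U.sub_mem h1 h2
  obtain ⟨q', hq'⟩ := key
  refine have hq : Polynomial.aeval h (-q') = -(a * D h) := by simp [hq']
  ?_
  set q : Polynomial ℂ := -q' with hqdef
  have ha : a = -Polynomial.aeval h q / D h := by
    rw [hq]
    field_simp
  have hwitt : ∀ f : K, wittOp h c b (-1) f = (-1 / D h) * D f + (b / D h) * f := by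
    intro f
    have e0 : (-1 : ℤ) + 1 = 0 := by norm_num
    have hA1 : wittA h (-1) = -1 / D h := by rw [wittA, e0, zpow_zero]
    have hM1 : wittM h c b (-1) = b / D h := by
      rw [wittM, e0, zpow_zero]
      have hc0 : -((((-1 : ℤ) : ℂ) + 1) * c) = 0 := by push_cast; ring
      have hz : ((0 : ℂ) • (h ^ (-1 : ℤ)) : K) = 0 := by
        rw [← HahnSeries.C_mul_eq_smul]; simp
      rw [hc0, hz, zero_add, one_div_mul_eq_div]
    show fdOp (wittA h (-1)) (wittM h c b (-1)) f = _
    rw [fdOp_apply, hA1, hM1]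
  have hqstab : ∀ u ∈ U, Polynomial.aeval h q * u ∈ U := by
    have : Polynomial.aeval h q ∈ {f : K | ∀ u ∈ U, f * u ∈ U} := by
      rw [hA]; exact ⟨q, rfl⟩
    exact this
  have key2 : (m - Polynomial.aeval h q * b / D h)
      ∈ Set.range (fun p : Polynomial ℂ => Polynomial.aeval h p) := by
    rw [← hA]
    intro u hu
    have h1 : fdOp a m u ∈ U := hP u hu
    have h2 : wittOp h c b (-1) u ∈ U := hstab (-1) (by norm_num) u hu
    have h3 : Polynomial.aeval h q * wittOp h c b (-1) u ∈ U := hqstab _ h2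
    have heq : (m - Polynomial.aeval h q * b / D h) * u
        = fdOp a m u - Polynomial.aeval h q * wittOp h c b (-1) u := by
      rw [fdOp_apply, hwitt, ha]
      field_simp
      ring
    rw [heq]
    exact U.sub_mem h1 h3
  obtain ⟨p, hp⟩ := key2
  have hm : m = Polynomial.aeval h p + Polynomial.aeval h q * b / D h := by
    simp only at hp
    rw [hp]; ring
  refine ⟨p, q, ?_, ha, hm⟩
  apply LinearMap.ext
  intro f
  simp only [LinearMap.add_apply, LinearMap.comp_apply, LinearMap.coe_comp,
    Function.comp_apply, LinearMap.mulLeft_apply]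
  rw [fdOp_apply, hwitt, ha, hm]
  field_simp
  ring


end
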